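/- arXiv:2409.08173 — 6 statements merged into one kernel-verified Lean document; each statement's English description precedes it below -/
import Mathlib

section
/- For every N ≥ 1, the 2^N × 2^N matrix U_W^N = (1/√N) Σ_{r=1}^N Z^{⊗(r−1)} ⊗ X ⊗ I^{⊗(N−r)} is unitary, has real entries, and is symmetric, i.e. (U_W^N)ᵀ = U_W^N. -/
/-!
STATEMENT 1: For every N ≥ 1, the 2^N × 2^N matrix
U_W^N = (1/√N) Σ_{r=1}^N Z^{⊗(r−1)} ⊗ X ⊗ I^{⊗(N−r)}
is unitary, has real entries, and is symmetric ((U_W^N)ᵀ = U_W^N).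

We represent (ℂ²)^{⊗N} ≅ ℂ^{2^N} by indexing coordinates with functions
`Fin N → Fin 2`, so that an N-fold Kronecker product of 2×2 matrices
M₁ ⊗ ⋯ ⊗ M_N is the matrix with entries ∏ₖ (Mₖ)_{iₖ jₖ}.
-/

open Matrix

noncomputable section

/-- Pauli X matrix. -/
def X : Matrix (Fin 2) (Fin 2) ℂ := !![0, 1; 1, 0]

/-- Pauli Z matrix. -/
def Z : Matrix (Fin 2) (Fin 2) ℂ := !![1, 0; 0, -1]

/-- N-fold Kronecker (tensor) product `M 0 ⊗ M 1 ⊗ ⋯ ⊗ M (N-1)` of 2×2 matrices,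
acting on (ℂ²)^{⊗N} with coordinates indexed by `Fin N → Fin 2`. -/
def tpow {N : ℕ} (M : Fin N → Matrix (Fin 2) (Fin 2) ℂ) :
    Matrix (Fin N → Fin 2) (Fin N → Fin 2) ℂ :=
  Matrix.of fun i j => ∏ k, M k (i k) (j k)

/-- `U_W^N = (1/√N) Σ_{r=1}^N Z^{⊗(r−1)} ⊗ X ⊗ I^{⊗(N−r)}`
(with `r` ranging over the N tensor positions). -/
def UW (N : ℕ) : Matrix (Fin N → Fin 2) (Fin N → Fin 2) ℂ :=
  (Real.sqrt N : ℂ)⁻¹ •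
    ∑ r : Fin N, tpow (fun k => if k < r then Z else if k = r then X else 1)

lemma tpow_mul {N : ℕ} (M M' : Fin N → Matrix (Fin 2) (Fin 2) ℂ) :
    tpow M * tpow M' = tpow (fun k => M k * M' k) := by
  ext i j
  simp only [tpow, Matrix.mul_apply, Matrix.of_apply]
  rw [Fintype.prod_sum (fun k x => M k (i k) x * M' k x (j k))]
  simp [Finset.prod_mul_distrib]

lemma tpow_one {N : ℕ} : tpow (fun _ : Fin N => (1 : Matrix (Fin 2) (Fin 2) ℂ)) = 1 := by
  ext i j
  simp only [tpow, Matrix.of_apply, Matrix.one_apply]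
  by_cases h : i = j
  · subst h; simp
  · obtain ⟨k, hk⟩ := Function.ne_iff.mp h
    rw [if_neg h]
    exact Finset.prod_eq_zero (Finset.mem_univ k) (by simp [hk])

lemma tpow_update_neg {N : ℕ} (M : Fin N → Matrix (Fin 2) (Fin 2) ℂ) (t : Fin N) :
    tpow (Function.update M t (-(M t))) = - tpow M := by
  ext i j
  simp only [tpow, Matrix.of_apply, Matrix.neg_apply]
  rw [← Finset.prod_erase_mul _ _ (Finset.mem_univ t),
      ← Finset.prod_erase_mul _ _ (Finset.mem_univ t)]
  rw [Finset.prod_congr rfl (fun k hk => by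
    rw [Function.update_of_ne (Finset.ne_of_mem_erase hk)])]
  simp [mul_comm]

def Afac (N : ℕ) (r : Fin N) : Fin N → Matrix (Fin 2) (Fin 2) ℂ :=
  fun k => if k < r then Z else if k = r then X else 1

lemma Afac_sq {N : ℕ} (r k : Fin N) : Afac N r k * Afac N r k = 1 := by
  unfold Afac
  split_ifs <;> ext a b <;> fin_cases a <;> fin_cases b <;>
    norm_num [X, Z, Matrix.mul_apply, Matrix.one_apply, Fin.sum_univ_two]

lemma Afac_anticomm {N : ℕ} (r s : Fin N) (h : r < s) :
    (fun k => Afac N r k * Afac N s k) =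
      Function.update (fun k => Afac N s k * Afac N r k) r
        (-((fun k => Afac N s k * Afac N r k) r)) := by
  funext k
  rcases eq_or_ne k r with rfl | hk
  · simp only [Function.update_self]
    unfold Afac
    simp only [lt_irrefl, if_neg (lt_irrefl k), if_pos rfl, if_pos h]
    ext a b <;> fin_cases a <;> fin_cases b <;>
      norm_num [X, Z, Matrix.mul_apply, Matrix.one_apply, Matrix.neg_apply, Fin.sum_univ_two]
  · rw [Function.update_of_ne hk]
    unfold Afac
    split_ifs <;> first
      | rfl
      | (exfalso; omega)
      | (ext a b <;> fin_cases a <;> fin_cases b <;>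
          norm_num [X, Z, Matrix.mul_apply, Matrix.one_apply, Fin.sum_univ_two])

lemma Afac_symm {N : ℕ} (r k : Fin N) (a b : Fin 2) : Afac N r k a b = Afac N r k b a := by
  unfold Afac; split_ifs <;> fin_cases a <;> fin_cases b <;> simp [X, Z, Matrix.one_apply]

lemma Afac_conj {N : ℕ} (r k : Fin N) (a b : Fin 2) :
    (starRingEnd ℂ) (Afac N r k a b) = Afac N r k a b := by
  unfold Afac; split_ifs <;> fin_cases a <;> fin_cases b <;> simp [X, Z, Matrix.one_apply]

lemma A_anti {N : ℕ} {r s : Fin N} (h : r < s) :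
    tpow (Afac N r) * tpow (Afac N s) = -(tpow (Afac N s) * tpow (Afac N r)) := by
  rw [tpow_mul, tpow_mul, Afac_anticomm r s h, tpow_update_neg]

lemma A_sq {N : ℕ} (r : Fin N) : tpow (Afac N r) * tpow (Afac N r) = 1 := by
  rw [tpow_mul, show (fun k => Afac N r k * Afac N r k) = fun _ : Fin N => (1 : Matrix (Fin 2) (Fin 2) ℂ) from funext (Afac_sq r), tpow_one]

lemma UW_eq (N : ℕ) : UW N = (Real.sqrt N : ℂ)⁻¹ • ∑ r : Fin N, tpow (Afac N r) := rfl

lemma S_sq (N : ℕ) :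
    (∑ r : Fin N, tpow (Afac N r)) * (∑ r : Fin N, tpow (Afac N r)) =
      (N : ℂ) • (1 : Matrix (Fin N → Fin 2) (Fin N → Fin 2) ℂ) := by
  set A : Fin N → Matrix (Fin N → Fin 2) (Fin N → Fin 2) ℂ := fun r => tpow (Afac N r) with hA
  have hkey : ∀ r s : Fin N, A r * A s + A s * A r =
      if r = s then (2 : ℂ) • (1 : Matrix (Fin N → Fin 2) (Fin N → Fin 2) ℂ) else 0 := by
    intro r s
    rcases lt_trichotomy r s with h | rfl | h
    · rw [A_anti h, if_neg h.ne, neg_add_cancel]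
    · rw [A_sq, if_pos rfl, two_smul]
    · rw [A_anti h, if_neg h.ne', add_neg_cancel]
  have e1 : (∑ r, A r) * (∑ r, A r) = ∑ r, ∑ s, A r * A s := by
    rw [Finset.sum_mul_sum]
  have h2 : (2 : ℂ) • ((∑ r, A r) * (∑ r, A r)) = (2 : ℂ) • ((N : ℂ) • (1 : Matrix (Fin N → Fin 2) (Fin N → Fin 2) ℂ)) := by
    rw [two_smul, two_smul]
    calc (∑ r, A r) * (∑ r, A r) + (∑ r, A r) * (∑ r, A r)
        = (∑ r, ∑ s, A r * A s) + ∑ r, ∑ s, A s * A r := by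
          rw [e1]; congr 1; rw [Finset.sum_comm]
      _ = ∑ r, ∑ s, (A r * A s + A s * A r) := by
          rw [← Finset.sum_add_distrib]
          exact Finset.sum_congr rfl fun r _ => (Finset.sum_add_distrib).symm
      _ = ∑ r : Fin N, ∑ s : Fin N,
            (if r = s then (2 : ℂ) • (1 : Matrix (Fin N → Fin 2) (Fin N → Fin 2) ℂ) else 0) :=
          Finset.sum_congr rfl fun r _ => Finset.sum_congr rfl fun s _ => hkey r s
      _ = ∑ r : Fin N, (2 : ℂ) • (1 : Matrix (Fin N → Fin 2) (Fin N → Fin 2) ℂ) := by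
          refine Finset.sum_congr rfl fun r _ => ?_
          simp
      _ = (N : ℂ) • (1 : Matrix (Fin N → Fin 2) (Fin N → Fin 2) ℂ) +
            (N : ℂ) • (1 : Matrix (Fin N → Fin 2) (Fin N → Fin 2) ℂ) := by
          rw [Finset.sum_const, Finset.card_univ, Fintype.card_fin]
          rw [← two_smul ℂ, smul_smul, ← Nat.cast_smul_eq_nsmul ℂ, smul_smul, mul_comm]
  exact smul_right_injective _ (two_ne_zero) h2

lemma UW_mul_self (N : ℕ) (hN : 1 ≤ N) : UW N * UW N = 1 := by
  rw [UW_eq, Matrix.smul_mul, Matrix.mul_smul, S_sq, smul_smul, smul_smul]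
  have hx : ((Real.sqrt N : ℂ))⁻¹ * (Real.sqrt N : ℂ)⁻¹ * (N : ℂ) = 1 := by
    have h0 : (0:ℝ) ≤ (N:ℝ) := by positivity
    have hs : (Real.sqrt N : ℂ) * (Real.sqrt N : ℂ) = (N : ℂ) := by
      rw [← Complex.ofReal_mul, Real.mul_self_sqrt h0]
      norm_num
    have hne : (Real.sqrt N : ℂ) ≠ 0 := by
      simp only [ne_eq, Complex.ofReal_eq_zero]
      exact ne_of_gt (Real.sqrt_pos.mpr (by exact_mod_cast hN))
    rw [← mul_inv, hs]
    exact inv_mul_cancel₀ (Nat.cast_ne_zero.mpr (Nat.one_le_iff_ne_zero.mp hN))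
  rw [hx, one_smul]

lemma UW_symm (N : ℕ) : (UW N)ᵀ = UW N := by
  rw [UW_eq, Matrix.transpose_smul, Matrix.transpose_sum]
  congr 1
  refine Finset.sum_congr rfl fun r _ => ?_
  ext i j
  simp only [tpow, Matrix.transpose_apply, Matrix.of_apply]
  exact Finset.prod_congr rfl fun k _ => Afac_symm r k (j k) (i k)

lemma UW_conj (N : ℕ) (i j : Fin N → Fin 2) : (starRingEnd ℂ) (UW N i j) = UW N i j := by
  rw [UW_eq]
  simp only [Matrix.smul_apply, Matrix.sum_apply, smul_eq_mul, _root_.map_mul, map_sum, map_inv₀,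
    Complex.conj_ofReal, tpow, Matrix.of_apply, map_prod]
  congr 1
  refine Finset.sum_congr rfl fun r _ => Finset.prod_congr rfl fun k _ => ?_
  exact Afac_conj r k (i k) (j k)

theorem UW_unitary_real_symmetric (N : ℕ) (hN : 1 ≤ N) :
    UW N ∈ Matrix.unitaryGroup (Fin N → Fin 2) ℂ ∧
    (∀ i j, (UW N i j).im = 0) ∧
    (UW N)ᵀ = UW N := by
  have hsymm := UW_symm N
  have hherm : (UW N)ᴴ = UW N := by
    ext i j
    rw [Matrix.conjTranspose_apply]
    have : UW N j i = UW N i j := by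
      conv_lhs => rw [← hsymm]
      rw [Matrix.transpose_apply]
    rw [← this]
    exact UW_conj N j i
  refine ⟨?_, fun i j => ?_, hsymm⟩
  · rw [Matrix.mem_unitaryGroup_iff, Matrix.star_eq_conjTranspose, hherm]
    exact UW_mul_self N hN
  · have := UW_conj N i j
    rw [Complex.conj_eq_iff_im] at this
    exact this
end
end

section
/- Let N ≥ 2 and U_W^N = (1/√N) Σ_{r=1}^N Z^{⊗(r−1)} ⊗ X ⊗ I^{⊗(N−r)}. Then for every bit string s = s₁⋯s_N ∈ {0,1}^N, the recovery operator V_s = (XZ)^{s₁} ⊗ ⊗_{k=2}^{N} Z^{s₂+⋯+s_{k−1}} X^{s_k} satisfies V_s U_W^N |s⟩ = |W_N⟩. -/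
/-!
STATEMENT 3: Let N ≥ 2 and U_W^N = (1/√N) Σ_{r=1}^N Z^{⊗(r−1)} ⊗ X ⊗ I^{⊗(N−r)}.
Then for every bit string s = s₁⋯s_N ∈ {0,1}^N, the recovery operator
V_s = (XZ)^{s₁} ⊗ ⊗_{k=2}^{N} Z^{s₂+⋯+s_{k−1}} X^{s_k}
satisfies V_s U_W^N |s⟩ = |W_N⟩.

We represent (ℂ²)^{⊗N} ≅ ℂ^{2^N} by indexing coordinates with functions
`Fin N → Fin 2` (position k of the statement corresponds to index k-1 here).
Since Z² = I, using the natural-number exponent Σ_{l} s_l for Z agrees with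
taking the exponent modulo its parity.
-/

open Matrix

noncomputable section

/-- Computational basis vector `|s⟩` of (ℂ²)^{⊗N}. -/
def ketN {N : ℕ} (s : Fin N → Fin 2) : (Fin N → Fin 2) → ℂ :=
  fun t => if t = s then 1 else 0

/-- The N-qubit W state. -/
def wState (N : ℕ) : (Fin N → Fin 2) → ℂ :=
  (Real.sqrt N : ℂ)⁻¹ • ∑ k : Fin N, ketN (fun j => if j = k then 1 else 0)

/-- The recovery operator
`V_s = (XZ)^{s₁} ⊗ ⊗_{k=2}^{N} Z^{s₂+⋯+s_{k−1}} X^{s_k}`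
(the empty sum for k = 2 is 0, so the factor at position 2 is X^{s₂}). -/
def Vrec {N : ℕ} (s : Fin N → Fin 2) :
    Matrix (Fin N → Fin 2) (Fin N → Fin 2) ℂ :=
  tpow (fun k =>
    if (k : ℕ) = 0 then (X * Z) ^ (s k : ℕ)
    else Z ^ (∑ l ∈ Finset.univ.filter
        (fun l : Fin N => 1 ≤ (l : ℕ) ∧ (l : ℕ) < (k : ℕ)), (s l : ℕ))
      * X ^ (s k : ℕ))

/- ### auxiliary lemmas -/

lemma fin2cases (a : Fin 2) : a = 0 ∨ a = 1 := by omega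

lemma Z_apply (i j : Fin 2) : Z i j = if i = j then ((-1:ℂ))^(j:ℕ) else 0 := by
  fin_cases i <;> fin_cases j <;> simp [Z]

lemma X_apply (i j : Fin 2) : X i j = if i = 1 + j then 1 else 0 := by
  fin_cases i <;> fin_cases j <;> simp [X]

lemma Zpow (a : ℕ) : Z ^ a = !![1, 0; 0, ((-1:ℂ))^a] := by
  induction a with
  | zero => ext i j; fin_cases i <;> fin_cases j <;> simp
  | succ n ih =>
    rw [pow_succ, ih]
    ext i j
    fin_cases i <;> fin_cases j <;>
      simp [Z, Matrix.mul_apply, Fin.sum_univ_two, pow_succ]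

lemma Zpow_apply (a : ℕ) (i j : Fin 2) :
    (Z ^ a) i j = if i = j then ((-1:ℂ))^(a * (j:ℕ)) else 0 := by
  rw [Zpow]
  fin_cases i <;> fin_cases j <;> simp

lemma XZpow_apply (b : Fin 2) (i j : Fin 2) :
    ((X * Z) ^ (b:ℕ)) i j = if i = b + j then ((-1:ℂ))^((b:ℕ) * (j:ℕ)) else 0 := by
  rcases fin2cases b with hb | hb <;> subst hb
  · simp [Matrix.one_apply]
  · rw [Fin.val_one, pow_one, Matrix.mul_apply, Fin.sum_univ_two]
    fin_cases i <;> fin_cases j <;> simp [X, Z]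

lemma ZaXb_apply (a : ℕ) (b : Fin 2) (i j : Fin 2) :
    (Z ^ a * X ^ (b:ℕ)) i j
      = if i = b + j then ((-1:ℂ))^(a * (((b + j : Fin 2)):ℕ)) else 0 := by
  rcases fin2cases b with hb | hb <;> subst hb
  · simp [Zpow_apply]
  · rw [Fin.val_one, pow_one, Matrix.mul_apply, Fin.sum_univ_two]
    simp only [Zpow_apply, X_apply]
    fin_cases i <;> fin_cases j <;> simp

lemma neg_one_sq_pow (n : ℕ) : ((-1:ℂ))^n * ((-1:ℂ))^n = 1 := by
  rw [← pow_add]; exact Even.neg_one_pow ⟨n, rfl⟩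

lemma tpow_mulVec_ket {N : ℕ} (M : Fin N → Matrix (Fin 2) (Fin 2) ℂ)
    (s : Fin N → Fin 2) (t : Fin N → Fin 2) :
    (tpow M).mulVec (ketN s) t = ∏ k, M k (t k) (s k) := by
  simp only [Matrix.mulVec, dotProduct, tpow, ketN, Matrix.of_apply,
    mul_ite, mul_one, mul_zero]
  rw [Finset.sum_ite_eq' Finset.univ s]
  simp

lemma prod_ite_vec {N : ℕ} (t g : Fin N → Fin 2) (c : Fin N → ℂ) :
    ∏ k, (if t k = g k then c k else 0) = if t = g then ∏ k, c k else 0 := by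
  by_cases h : t = g
  · subst h; simp
  · rw [if_neg h]
    obtain ⟨k, hk⟩ := Function.ne_iff.mp h
    exact Finset.prod_eq_zero (Finset.mem_univ k) (by simp [hk])

lemma sum_mulVec' {N : ℕ} {ι : Type*} (sf : Finset ι)
    (M : ι → Matrix (Fin N → Fin 2) (Fin N → Fin 2) ℂ) (v : (Fin N → Fin 2) → ℂ) :
    (∑ i ∈ sf, M i).mulVec v = ∑ i ∈ sf, (M i).mulVec v := by
  ext t
  simp only [Matrix.mulVec, dotProduct, Finset.sum_apply, Matrix.sum_apply,
    Finset.sum_mul]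
  exact Finset.sum_comm

/-- Action of one summand of `UW` on `|s⟩`. -/
lemma UWterm {N : ℕ} (s : Fin N → Fin 2) (r : Fin N) :
    (tpow (fun k => if k < r then Z else if k = r then X else 1)).mulVec (ketN s)
      = ((-1:ℂ))^(∑ k ∈ Finset.univ.filter (fun k : Fin N => (k:ℕ) < (r:ℕ)), (s k : ℕ))
        • ketN (fun k => if k = r then 1 + s k else s k) := by
  funext t
  rw [Pi.smul_apply, tpow_mulVec_ket]
  have hfac : ∀ k : Fin N,
      (if k < r then Z else if k = r then X else 1) (t k) (s k)
        = if t k = (if k = r then 1 + s k else s k)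
            then (if (k:ℕ) < (r:ℕ) then ((-1:ℂ))^((s k : ℕ)) else 1) else 0 := by
    intro k
    by_cases hlt : k < r
    · have hne : k ≠ r := ne_of_lt hlt
      have hv : (k:ℕ) < (r:ℕ) := hlt
      simp [hlt, hne, hv, Z_apply]
    · have hv : ¬ (k:ℕ) < (r:ℕ) := hlt
      by_cases heq : k = r
      · subst heq
        simp [hlt, hv, X_apply]
      · simp [hlt, hv, heq, Matrix.one_apply]
  simp only [hfac]
  rw [prod_ite_vec, ← Finset.prod_filter, Finset.prod_pow_eq_pow_sum]
  simp only [ketN, smul_eq_mul, mul_ite, mul_one, mul_zero]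


lemma fin2_mul_self (x : Fin 2) : (x : ℕ) * (x : ℕ) = (x : ℕ) := by
  rcases fin2cases x with h | h <;> subst h <;> decide
lemma fin2_add_flip (x : Fin 2) : x + (1 + x) = 1 := by omega
lemma fin2_add_self (x : Fin 2) : x + x = 0 := by omega
lemma fin2_mul_flip (x : Fin 2) : (x : ℕ) * (((1 + x : Fin 2)) : ℕ) = 0 := by
  rcases fin2cases x with h | h <;> subst h <;> decide

def aexp {N : ℕ} (s : Fin N → Fin 2) (k : Fin N) : ℕ :=
  ∑ l ∈ Finset.univ.filter
      (fun l : Fin N => 1 ≤ (l : ℕ) ∧ (l : ℕ) < (k : ℕ)), (s l : ℕ)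

/-- Action of `Vrec` on the flipped basis state. -/
lemma Vterm {N : ℕ} (hN : 2 ≤ N) (s : Fin N → Fin 2) (r : Fin N) :
    (Vrec s).mulVec (ketN (fun k => if k = r then 1 + s k else s k))
      = ((-1:ℂ))^(∑ k ∈ Finset.univ.filter (fun k : Fin N => (k:ℕ) < (r:ℕ)), (s k : ℕ))
        • ketN (fun k => if k = r then 1 else 0) := by
  have hN0 : 0 < N := by omega
  set z : Fin N := ⟨0, hN0⟩ with hz
  have haz : aexp s z = 0 := by
    apply Finset.sum_eq_zero
    intro l hl
    simp only [Finset.mem_filter, Fin.val_mk] at hl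
    have h0 : ((⟨0, hN0⟩ : Fin N) : ℕ) = 0 := rfl
    omega
  funext t
  rw [Pi.smul_apply, Vrec, tpow_mulVec_ket]
  have hfac : ∀ k : Fin N,
      (if (k : ℕ) = 0 then (X * Z) ^ (s k : ℕ)
        else Z ^ (∑ l ∈ Finset.univ.filter
            (fun l : Fin N => 1 ≤ (l : ℕ) ∧ (l : ℕ) < (k : ℕ)), (s l : ℕ))
          * X ^ (s k : ℕ))
        (t k) (if k = r then 1 + s k else s k)
        = if t k = (if k = r then (1 : Fin 2) else 0)
            then ((-1:ℂ))^((if k = z then (if r = z then 0 else (s z : ℕ)) else 0)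
              + (if k = r then aexp s r else 0)) else 0 := by
    intro k
    by_cases hk0 : (k : ℕ) = 0
    · have hkz : k = z := Fin.ext (by simpa [hz] using hk0)
      subst hkz
      rw [if_pos hk0, XZpow_apply]
      by_cases hrz : r = z
      · subst hrz
        simp [fin2_add_flip, fin2_mul_flip, haz]
      · have hzr : ¬ z = r := fun h => hrz h.symm
        simp [hzr, hrz, fin2_add_self, fin2_mul_self]
    · have hkz : k ≠ z := by
        intro h; subst h; exact hk0 rfl
      rw [if_neg hk0, ZaXb_apply]
      by_cases hkr : k = r
      · subst hkr
        simp [hkz, fin2_add_flip, aexp]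
      · simp [hkz, hkr, fin2_add_self]
  simp only [hfac]
  rw [prod_ite_vec, Finset.prod_pow_eq_pow_sum]
  have hsum : (∑ k : Fin N, ((if k = z then (if r = z then 0 else (s z : ℕ)) else 0)
        + (if k = r then aexp s r else 0)))
      = ∑ k ∈ Finset.univ.filter (fun k : Fin N => (k:ℕ) < (r:ℕ)), (s k : ℕ) := by
    rw [Finset.sum_add_distrib, Finset.sum_ite_eq' Finset.univ z,
      Finset.sum_ite_eq' Finset.univ r]
    simp only [Finset.mem_univ, if_pos]
    by_cases hrz : r = z
    · subst hrz
      have he : Finset.univ.filter (fun k : Fin N => (k:ℕ) < (z:ℕ)) = ∅ := by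
        ext k
        simp [hz]
      rw [he]
      simp [haz]
    · have hr1 : 1 ≤ (r : ℕ) := by
        rcases Nat.eq_zero_or_pos (r : ℕ) with h | h
        · exact absurd (Fin.ext (by simpa [hz] using h)) hrz
        · exact h
      have hsplit : Finset.univ.filter (fun k : Fin N => (k:ℕ) < (r:ℕ))
          = insert z (Finset.univ.filter
              (fun l : Fin N => 1 ≤ (l : ℕ) ∧ (l : ℕ) < (r : ℕ))) := by
        ext k
        simp only [Finset.mem_filter, Finset.mem_insert, Finset.mem_univ, true_and,
          Fin.ext_iff, hz]
        omega
      rw [hsplit, Finset.sum_insert (by simp [hz]), if_neg hrz]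
      rfl
  rw [hsum]
  simp only [ketN, smul_eq_mul, mul_ite, mul_one, mul_zero]

theorem WN_recovery (N : ℕ) (hN : 2 ≤ N) (s : Fin N → Fin 2) :
    (Vrec s).mulVec ((UW N).mulVec (ketN s)) = wState N := by
  have h1 : (UW N).mulVec (ketN s)
      = (Real.sqrt N : ℂ)⁻¹ • ∑ r : Fin N,
          (((-1:ℂ))^(∑ k ∈ Finset.univ.filter (fun k : Fin N => (k:ℕ) < (r:ℕ)), (s k : ℕ))
            • ketN (fun k => if k = r then 1 + s k else s k)) := by
    rw [UW, Matrix.smul_mulVec, sum_mulVec']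
    congr 1
    exact Finset.sum_congr rfl fun r _ => UWterm s r
  have h2 : ∀ r : Fin N,
      (Vrec s).mulVec
          (((-1:ℂ))^(∑ k ∈ Finset.univ.filter (fun k : Fin N => (k:ℕ) < (r:ℕ)), (s k : ℕ))
            • ketN (fun k => if k = r then 1 + s k else s k))
        = ketN (fun k => if k = r then 1 else 0) := by
    intro r
    rw [Matrix.mulVec_smul, Vterm hN s r, smul_smul, neg_one_sq_pow, one_smul]
  rw [h1, Matrix.mulVec_smul, ← Matrix.mulVecLin_apply, map_sum]
  simp only [Matrix.mulVecLin_apply, h2]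
  rfl
end
end

section
/- Let N ≥ 1, let l ∈ {1,…,N} be a qubit position, and let |ψ⟩ be a unit vector in (ℂ²)^{⊗N}. Suppose there exists a unitary U on ℂ^{2^N} such that for every s ∈ Fin 2^N there exist 2×2 unitaries R_k(s) for each k ≠ l and a nonzero scalar c_s ∈ ℂ with (R_1(s) ⊗ ⋯ ⊗ R_{l−1}(s) ⊗ I ⊗ R_{l+1}(s) ⊗ ⋯ ⊗ R_N(s)) Uᵀ|s⟩ = c_s |ψ⟩ (identity in slot l). Then the single-qubit reduced density matrix of |ψ⟩ at position l equals I/2, i.e. Tr_{∖l}[|ψ⟩⟨ψ|] = I/2. -/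
/-!
STATEMENT 10: Let N ≥ 1, let l ∈ {1,…,N} be a qubit position, and let |ψ⟩ be
a unit vector in (ℂ²)^{⊗N}.  Suppose there exists a unitary U on ℂ^{2^N} such
that for every computational basis label s there exist 2×2 unitaries R_k(s)
for each k ≠ l and a nonzero scalar c_s ∈ ℂ with
(R_1(s) ⊗ ⋯ ⊗ R_{l−1}(s) ⊗ I ⊗ R_{l+1}(s) ⊗ ⋯ ⊗ R_N(s)) Uᵀ|s⟩ = c_s|ψ⟩
(identity in slot l).  Then Tr_{∖l}[|ψ⟩⟨ψ|] = I/2.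

We represent (ℂ²)^{⊗N} ≅ ℂ^{2^N} by indexing coordinates with functions
`Fin N → Fin 2` (so basis labels s range over `Fin N → Fin 2`).
-/

open Matrix

noncomputable section

/-- The rank-one matrix `|v⟩⟨v|`. -/
def outer {N : ℕ} (v : (Fin N → Fin 2) → ℂ) :
    Matrix (Fin N → Fin 2) (Fin N → Fin 2) ℂ :=
  Matrix.of fun i j => v i * (starRingEnd ℂ) (v j)

/-- Partial trace `Tr_{∖l}` of a 2^N × 2^N matrix onto qubit position `l`. -/
def red1 {N : ℕ} (l : Fin N) (ρ : Matrix (Fin N → Fin 2) (Fin N → Fin 2) ℂ) :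
    Matrix (Fin 2) (Fin 2) ℂ :=
  Matrix.of fun a b => ∑ j : {k : Fin N // k ≠ l} → Fin 2,
    ρ (fun k => if h : k = l then a else j ⟨k, h⟩)
      (fun k => if h : k = l then b else j ⟨k, h⟩)

namespace NoMsgAux

variable {N : ℕ}

def glue (l : Fin N) (j : {k : Fin N // k ≠ l} → Fin 2) (a : Fin 2) : Fin N → Fin 2 :=
  fun k => if h : k = l then a else j ⟨k, h⟩

lemma glue_apply_l (l : Fin N) (j : {k : Fin N // k ≠ l} → Fin 2) (a : Fin 2) :
    glue l j a l = a := by simp [glue]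

lemma glue_apply_ne (l : Fin N) (j : {k : Fin N // k ≠ l} → Fin 2) (a : Fin 2)
    (k : {k : Fin N // k ≠ l}) : glue l j a k.1 = j k := by
  simp [glue, k.2]

def splitEquiv (l : Fin N) : (Fin N → Fin 2) ≃ (({k : Fin N // k ≠ l} → Fin 2) × Fin 2) where
  toFun i := (fun k => i k.1, i l)
  invFun p := glue l p.1 p.2
  left_inv i := by
    funext k
    by_cases h : k = l <;> simp [glue, h]
  right_inv p := by
    refine Prod.ext ?_ (glue_apply_l l p.1 p.2)
    funext k
    exact glue_apply_ne l p.1 p.2 k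

lemma red1_apply (l : Fin N) (ρ : Matrix (Fin N → Fin 2) (Fin N → Fin 2) ℂ) (a b : Fin 2) :
    red1 l ρ a b = ∑ j : {k : Fin N // k ≠ l} → Fin 2, ρ (glue l j a) (glue l j b) := rfl

lemma sum_glue (l : Fin N) (f : (Fin N → Fin 2) → ℂ) :
    ∑ t, f t = ∑ j : {k : Fin N // k ≠ l} → Fin 2, ∑ a : Fin 2, f (glue l j a) := by
  rw [← Equiv.sum_comp (splitEquiv l).symm f, Fintype.sum_prod_type]
  rfl

lemma prod_split (l : Fin N) (f : Fin N → ℂ) :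
    ∏ k, f k = f l * ∏ k : {k : Fin N // k ≠ l}, f k.1 := by
  rw [Fintype.prod_eq_mul_prod_compl l]
  congr 1
  exact (Finset.prod_subtype ({l}ᶜ) (p := fun k => k ≠ l)
    (fun x => by simp [Finset.mem_compl, Finset.mem_singleton]) f)

lemma tpow_glue (R : Fin N → Matrix (Fin 2) (Fin 2) ℂ) (l : Fin N)
    (j j' : {k : Fin N // k ≠ l} → Fin 2) (a a' : Fin 2) :
    tpow R (glue l j a) (glue l j' a')
      = R l a a' * ∏ k : {k : Fin N // k ≠ l}, R k.1 (j k) (j' k) := by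
  show (∏ k, R k (glue l j a k) (glue l j' a' k)) = _
  rw [prod_split l]
  rw [glue_apply_l, glue_apply_l]
  congr 1
  exact Finset.prod_congr rfl fun k _ => by rw [glue_apply_ne, glue_apply_ne]

lemma sumB (l : Fin N) (R : Fin N → Matrix (Fin 2) (Fin 2) ℂ)
    (hR : ∀ k, k ≠ l → R k ∈ Matrix.unitaryGroup (Fin 2) ℂ)
    (j1 j2 : {k : Fin N // k ≠ l} → Fin 2) :
    ∑ j : {k : Fin N // k ≠ l} → Fin 2,
      (∏ k, R k.1 (j k) (j1 k)) * (starRingEnd ℂ) (∏ k, R k.1 (j k) (j2 k))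
    = if j1 = j2 then 1 else 0 := by
  have key : ∀ k : {k : Fin N // k ≠ l},
      ∑ x : Fin 2, R k.1 x (j1 k) * (starRingEnd ℂ) (R k.1 x (j2 k))
        = if j1 k = j2 k then 1 else 0 := by
    intro k
    have h1 : star (R k.1) * R k.1 = 1 := Matrix.mem_unitaryGroup_iff'.mp (hR k.1 k.2)
    have h3 : (star (R k.1) * R k.1) (j2 k) (j1 k) = (1 : Matrix (Fin 2) (Fin 2) ℂ) (j2 k) (j1 k) := by
      rw [h1]
    rw [Matrix.mul_apply, Matrix.one_apply] at h3
    simp only [Matrix.star_apply, RCLike.star_def] at h3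
    calc ∑ x : Fin 2, R k.1 x (j1 k) * (starRingEnd ℂ) (R k.1 x (j2 k))
        = ∑ x : Fin 2, (starRingEnd ℂ) (R k.1 x (j2 k)) * R k.1 x (j1 k) := by
          exact Finset.sum_congr rfl fun x _ => mul_comm _ _
      _ = if j2 k = j1 k then 1 else 0 := h3
      _ = if j1 k = j2 k then 1 else 0 := by simp [eq_comm]
  calc ∑ j : {k : Fin N // k ≠ l} → Fin 2,
      (∏ k, R k.1 (j k) (j1 k)) * (starRingEnd ℂ) (∏ k, R k.1 (j k) (j2 k))
      = ∑ j : {k : Fin N // k ≠ l} → Fin 2,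
          ∏ k, (R k.1 (j k) (j1 k) * (starRingEnd ℂ) (R k.1 (j k) (j2 k))) := by
        refine Finset.sum_congr rfl fun j _ => ?_
        rw [map_prod, ← Finset.prod_mul_distrib]
    _ = ∏ k : {k : Fin N // k ≠ l}, ∑ x : Fin 2,
          (R k.1 x (j1 k) * (starRingEnd ℂ) (R k.1 x (j2 k))) := (Fintype.prod_sum (fun (k : {k : Fin N // k ≠ l}) (x : Fin 2) =>
          R k.1 x (j1 k) * (starRingEnd ℂ) (R k.1 x (j2 k)))).symm
    _ = ∏ k : {k : Fin N // k ≠ l}, (if j1 k = j2 k then (1:ℂ) else 0) :=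
        Finset.prod_congr rfl fun k _ => key k
    _ = if j1 = j2 then 1 else 0 := by
        by_cases hj : j1 = j2
        · simp [hj]
        · obtain ⟨k, hk⟩ := Function.ne_iff.mp hj
          rw [if_neg hj]
          exact Finset.prod_eq_zero (Finset.mem_univ k) (by simp [hk])

end NoMsgAux

namespace NoMsgAux

variable {N : ℕ}

lemma mulVec_glue (l : Fin N) (R : Fin N → Matrix (Fin 2) (Fin 2) ℂ) (hRl : R l = 1)
    (v : (Fin N → Fin 2) → ℂ) (j : {k : Fin N // k ≠ l} → Fin 2) (a : Fin 2) :
    (tpow R).mulVec v (glue l j a)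
      = ∑ j' : {k : Fin N // k ≠ l} → Fin 2,
          (∏ k : {k : Fin N // k ≠ l}, R k.1 (j k) (j' k)) * v (glue l j' a) := by
  show ∑ t, tpow R (glue l j a) t * v t = _
  rw [sum_glue l (fun t => tpow R (glue l j a) t * v t)]
  refine Finset.sum_congr rfl fun j' _ => ?_
  have : ∀ a' : Fin 2, tpow R (glue l j a) (glue l j' a') * v (glue l j' a')
      = (if a = a' then (1:ℂ) else 0) * ((∏ k : {k : Fin N // k ≠ l}, R k.1 (j k) (j' k)) * v (glue l j' a')) := by
    intro a'
    rw [tpow_glue, hRl, Matrix.one_apply]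
    ring
  simp only [this]
  simp only [ite_mul, one_mul, zero_mul, Finset.sum_ite_eq, Finset.mem_univ, if_true]

lemma red1_outer_mulVec (l : Fin N) (R : Fin N → Matrix (Fin 2) (Fin 2) ℂ)
    (hR : ∀ k, k ≠ l → R k ∈ Matrix.unitaryGroup (Fin 2) ℂ) (hRl : R l = 1)
    (v : (Fin N → Fin 2) → ℂ) :
    red1 l (outer ((tpow R).mulVec v)) = red1 l (outer v) := by
  ext a b
  rw [red1_apply, red1_apply]
  have expand : ∀ j : {k : Fin N // k ≠ l} → Fin 2,
      outer ((tpow R).mulVec v) (glue l j a) (glue l j b)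
        = ∑ j1 : {k : Fin N // k ≠ l} → Fin 2, ∑ j2 : {k : Fin N // k ≠ l} → Fin 2,
            ((∏ k, R k.1 (j k) (j1 k)) * (starRingEnd ℂ) (∏ k, R k.1 (j k) (j2 k)))
              * (v (glue l j1 a) * (starRingEnd ℂ) (v (glue l j2 b))) := by
    intro j
    show ((tpow R).mulVec v (glue l j a)) * (starRingEnd ℂ) ((tpow R).mulVec v (glue l j b)) = _
    rw [mulVec_glue l R hRl, mulVec_glue l R hRl, map_sum, Finset.sum_mul_sum]
    refine Finset.sum_congr rfl fun j1 _ => Finset.sum_congr rfl fun j2 _ => ?_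
    rw [_root_.map_mul]
    ring
  simp only [expand]
  have key : ∀ j1, ∑ j2 : {k : Fin N // k ≠ l} → Fin 2, ∑ j : {k : Fin N // k ≠ l} → Fin 2,
      ((∏ k, R k.1 (j k) (j1 k)) * (starRingEnd ℂ) (∏ k, R k.1 (j k) (j2 k)))
        * (v (glue l j1 a) * (starRingEnd ℂ) (v (glue l j2 b)))
      = v (glue l j1 a) * (starRingEnd ℂ) (v (glue l j1 b)) := by
    intro j1
    have inner : ∀ j2, ∑ j : {k : Fin N // k ≠ l} → Fin 2,
        ((∏ k, R k.1 (j k) (j1 k)) * (starRingEnd ℂ) (∏ k, R k.1 (j k) (j2 k)))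
          * (v (glue l j1 a) * (starRingEnd ℂ) (v (glue l j2 b)))
        = (if j1 = j2 then (1:ℂ) else 0) * (v (glue l j1 a) * (starRingEnd ℂ) (v (glue l j2 b))) := by
      intro j2
      rw [← Finset.sum_mul, sumB l R hR]
    simp only [inner]
    simp only [ite_mul, one_mul, zero_mul, Finset.sum_ite_eq, Finset.mem_univ, if_true]
  rw [Finset.sum_comm]
  refine Finset.sum_congr rfl fun j1 _ => ?_
  rw [Finset.sum_comm, key j1]
  rfl

end NoMsgAux

namespace NoMsgAux

variable {N : ℕ}

lemma outer_smul (c : ℂ) (ψ : (Fin N → Fin 2) → ℂ) :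
    outer (c • ψ) = (c * (starRingEnd ℂ) c) • outer ψ := by
  ext i j
  show (c • ψ) i * (starRingEnd ℂ) ((c • ψ) j) = (c * (starRingEnd ℂ) c) * (ψ i * (starRingEnd ℂ) (ψ j))
  simp only [Pi.smul_apply, smul_eq_mul, _root_.map_mul]
  ring

lemma red1_smul (l : Fin N) (x : ℂ) (ρ : Matrix (Fin N → Fin 2) (Fin N → Fin 2) ℂ) :
    red1 l (x • ρ) = x • red1 l ρ := by
  ext a b
  rw [Matrix.smul_apply, red1_apply, red1_apply, Finset.smul_sum]
  simp only [Matrix.smul_apply]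

lemma red1_sum {α : Type*} [Fintype α] (l : Fin N)
    (ρ : α → Matrix (Fin N → Fin 2) (Fin N → Fin 2) ℂ) :
    red1 l (∑ s, ρ s) = ∑ s, red1 l (ρ s) := by
  ext a b
  rw [red1_apply, Matrix.sum_apply]
  simp only [Matrix.sum_apply, red1_apply]
  exact Finset.sum_comm

lemma sum_outer_col (U : Matrix (Fin N → Fin 2) (Fin N → Fin 2) ℂ)
    (hU : U ∈ Matrix.unitaryGroup (Fin N → Fin 2) ℂ) :
    ∑ s : Fin N → Fin 2, outer (Uᵀ.mulVec (ketN s)) = 1 := by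
  have hcol : ∀ s i, Uᵀ.mulVec (ketN s) i = U s i := by
    intro s i
    show ∑ t, Uᵀ i t * ketN s t = U s i
    simp [ketN, Matrix.transpose_apply]
  have h1 : star U * U = 1 := Matrix.mem_unitaryGroup_iff'.mp hU
  ext i j
  rw [Matrix.sum_apply]
  have : ∀ s : Fin N → Fin 2, outer (Uᵀ.mulVec (ketN s)) i j
      = (starRingEnd ℂ) (U s j) * U s i := by
    intro s
    show (Uᵀ.mulVec (ketN s)) i * (starRingEnd ℂ) ((Uᵀ.mulVec (ketN s)) j) = _
    rw [hcol, hcol]; ring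
  simp only [this]
  have h2 : (star U * U) j i = (1 : Matrix (Fin N → Fin 2) (Fin N → Fin 2) ℂ) j i := by rw [h1]
  rw [Matrix.mul_apply] at h2
  simp only [Matrix.star_apply, RCLike.star_def] at h2
  rw [h2, Matrix.one_apply, Matrix.one_apply]
  simp [eq_comm]

lemma glue_eq_iff (l : Fin N) (j : {k : Fin N // k ≠ l} → Fin 2) (a b : Fin 2) :
    glue l j a = glue l j b ↔ a = b := by
  constructor
  · intro h
    have := congrFun h l
    rwa [glue_apply_l, glue_apply_l] at this
  · intro h; rw [h]

lemma red1_one (l : Fin N) :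
    red1 l (1 : Matrix (Fin N → Fin 2) (Fin N → Fin 2) ℂ)
      = ((Fintype.card ({k : Fin N // k ≠ l} → Fin 2) : ℂ)) • 1 := by
  ext a b
  rw [red1_apply, Matrix.smul_apply, Matrix.one_apply]
  have : ∀ j : {k : Fin N // k ≠ l} → Fin 2,
      (1 : Matrix (Fin N → Fin 2) (Fin N → Fin 2) ℂ) (glue l j a) (glue l j b)
        = if a = b then (1:ℂ) else 0 := by
    intro j
    rw [Matrix.one_apply]
    simp [glue_eq_iff]
  simp only [this]
  rw [Finset.sum_const, Finset.card_univ]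
  by_cases hab : a = b <;> simp [hab]

lemma trace_red1_outer (l : Fin N) (ψ : (Fin N → Fin 2) → ℂ)
    (hψ : ∑ t, Complex.normSq (ψ t) = 1) :
    (red1 l (outer ψ)).trace = 1 := by
  rw [Matrix.trace]
  have hdiag : ∀ a : Fin 2, (red1 l (outer ψ)).diag a
      = ∑ j : {k : Fin N // k ≠ l} → Fin 2, (Complex.normSq (ψ (glue l j a)) : ℂ) := by
    intro a
    show red1 l (outer ψ) a a = _
    rw [red1_apply]
    refine Finset.sum_congr rfl fun j _ => ?_
    show ψ (glue l j a) * (starRingEnd ℂ) (ψ (glue l j a)) = _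
    rw [mul_comm]
    exact Complex.normSq_eq_conj_mul_self.symm
  simp only [hdiag]
  rw [Finset.sum_comm]
  rw [← sum_glue l (fun t => (Complex.normSq (ψ t) : ℂ))]
  rw [← Complex.ofReal_sum]
  rw [hψ]
  norm_num

end NoMsgAux

open NoMsgAux in
theorem no_message_forces_maximally_mixed (N : ℕ) (hN : 1 ≤ N) (l : Fin N)
    (ψ : (Fin N → Fin 2) → ℂ)
    (hψ : ∑ t, Complex.normSq (ψ t) = 1)
    (U : Matrix (Fin N → Fin 2) (Fin N → Fin 2) ℂ)
    (hU : U ∈ Matrix.unitaryGroup (Fin N → Fin 2) ℂ)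
    (h : ∀ s : Fin N → Fin 2, ∃ R : Fin N → Matrix (Fin 2) (Fin 2) ℂ,
      (∀ k, k ≠ l → R k ∈ Matrix.unitaryGroup (Fin 2) ℂ) ∧
      R l = 1 ∧
      ∃ c : ℂ, c ≠ 0 ∧ (tpow R).mulVec (Uᵀ.mulVec (ketN s)) = c • ψ) :
    red1 l (outer ψ) = (2 : ℂ)⁻¹ • (1 : Matrix (Fin 2) (Fin 2) ℂ) := by
  classical
  choose R hR hRl c hc0 hceq using h
  set C : ℂ := (Fintype.card ({k : Fin N // k ≠ l} → Fin 2) : ℂ) with hC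
  have hCne : C ≠ 0 := by
    rw [hC]
    exact_mod_cast Nat.cast_ne_zero.mpr Fintype.card_ne_zero
  set w : (Fin N → Fin 2) → (Fin N → Fin 2) → ℂ := fun s => Uᵀ.mulVec (ketN s) with hw
  have hws : ∀ s, red1 l (outer (w s)) = (c s * (starRingEnd ℂ) (c s)) • red1 l (outer ψ) := by
    intro s
    have := red1_outer_mulVec l (R s) (hR s) (hRl s) (w s)
    rw [hceq s] at this
    rw [← this, outer_smul, red1_smul]
  have hsum : ∑ s : Fin N → Fin 2, red1 l (outer (w s)) = C • 1 := by
    rw [← red1_sum l (fun s => outer (w s))]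
    have : (∑ s : Fin N → Fin 2, outer (w s)) = 1 := sum_outer_col U hU
    rw [this, red1_one]
  set m : ℂ := ∑ s : Fin N → Fin 2, c s * (starRingEnd ℂ) (c s) with hm
  have hkey : m • red1 l (outer ψ) = C • 1 := by
    rw [← hsum]
    simp only [hws]
    rw [← Finset.sum_smul]
  have htr : m = C * 2 := by
    have := congrArg Matrix.trace hkey
    rw [Matrix.trace_smul, Matrix.trace_smul, trace_red1_outer l ψ hψ, Matrix.trace_one] at this
    simpa [smul_eq_mul, Fintype.card_fin] using this
  have hm2 : m = 2 * C := by rw [htr]; ring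
  rw [hm2] at hkey
  have h2C : (2 * C) ≠ 0 := by
    simp [hCne]
  calc red1 l (outer ψ) = (2 * C)⁻¹ • ((2 * C) • red1 l (outer ψ)) := by
        rw [smul_smul, inv_mul_cancel₀ h2C, one_smul]
    _ = (2 * C)⁻¹ • (C • (1 : Matrix (Fin 2) (Fin 2) ℂ)) := by rw [hkey]
    _ = (2 : ℂ)⁻¹ • 1 := by
        rw [smul_smul]
        congr 1
        field_simp
end
end

section
/- Let N > 2 and let l ∈ {1,…,N} be any qubit position. There do not exist a unitary U on ℂ^{2^N} and, for every s ∈ Fin 2^N, 2×2 unitaries R_k(s) for each k ≠ l and nonzero scalars c_s ∈ ℂ such that (R_1(s) ⊗ ⋯ ⊗ R_{l−1}(s) ⊗ I ⊗ R_{l+1}(s) ⊗ ⋯ ⊗ R_N(s)) Uᵀ|s⟩ = c_s |W_N⟩ for all s (identity in slot l). Equivalently, in any one-way LOCC allocation of the N-qubit W state through a central hub, every end node must receive at least one classical bit. -/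
/-!
STATEMENT 11: Let N > 2 and let l ∈ {1,…,N} be any qubit position.  There do
not exist a unitary U on ℂ^{2^N} and, for every basis label s, 2×2 unitaries
R_k(s) for each k ≠ l and nonzero scalars c_s ∈ ℂ such that
(R_1(s) ⊗ ⋯ ⊗ R_{l−1}(s) ⊗ I ⊗ R_{l+1}(s) ⊗ ⋯ ⊗ R_N(s)) Uᵀ|s⟩ = c_s |W_N⟩
for all s (identity in slot l).  (Every end node must receive at least one
classical bit in any one-way LOCC allocation of the N-qubit W state.)

We represent (ℂ²)^{⊗N} ≅ ℂ^{2^N} by indexing coordinates with functions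
`Fin N → Fin 2`.
-/

open Matrix Finset

noncomputable section

-- columns of tpow of unitaries are orthonormal
lemma tpow_col_orth {N : ℕ} (R : Fin N → Matrix (Fin 2) (Fin 2) ℂ)
    (hR : ∀ k, star (R k) * R k = 1) (i j : Fin N → Fin 2) :
    ∑ t, (starRingEnd ℂ) (tpow R t i) * tpow R t j = if i = j then 1 else 0 := by
  have h1 : ∀ t : Fin N → Fin 2, (starRingEnd ℂ) (tpow R t i) * tpow R t j
      = ∏ k, ((starRingEnd ℂ) (R k (t k) (i k)) * R k (t k) (j k)) := by
    intro t
    simp [tpow, map_prod, Finset.prod_mul_distrib]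
  simp_rw [h1]
  rw [← Fintype.piFinset_univ, ← Finset.prod_univ_sum (fun _ => (univ : Finset (Fin 2)))
      (fun k a => (starRingEnd ℂ) (R k a (i k)) * R k a (j k))]
  have h2 : ∀ k : Fin N, (∑ a : Fin 2, (starRingEnd ℂ) (R k a (i k)) * R k a (j k))
      = if i k = j k then 1 else 0 := by
    intro k
    have := congrFun (congrFun (hR k) (i k)) (j k)
    simpa [Matrix.mul_apply, Matrix.one_apply, Matrix.conjTranspose_apply] using this
  simp_rw [h2]
  by_cases h : i = j
  · simp [h]
  · obtain ⟨k, hk⟩ := Function.ne_iff.mp h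
    rw [if_neg h]
    exact Finset.prod_eq_zero (Finset.mem_univ k) (if_neg hk)

lemma block_col {N : ℕ} {l : Fin N} {M : Matrix (Fin N → Fin 2) (Fin N → Fin 2) ℂ}
    (hcol : ∀ i j, ∑ t, (starRingEnd ℂ) (M t i) * M t j = if i = j then 1 else 0)
    (hblock : ∀ t i, t l ≠ i l → M t i = 0) (b : Fin 2) (i j : Fin N → Fin 2) :
    ∑ t ∈ univ.filter (fun t => t l = b), (starRingEnd ℂ) (M t i) * M t j
      = if i = j ∧ i l = b then (1:ℂ) else 0 := by
  by_cases hi : i l = b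
  · by_cases hj : j l = b
    · rw [Finset.sum_filter]
      have hext : ∀ t : Fin N → Fin 2,
          (if t l = b then (starRingEnd ℂ) (M t i) * M t j else 0)
            = (starRingEnd ℂ) (M t i) * M t j := by
        intro t
        by_cases ht : t l = b
        · simp [ht]
        · rw [if_neg ht, hblock t i (by rw [hi]; exact ht), map_zero, zero_mul]
      simp_rw [hext]
      rw [hcol]
      by_cases hij : i = j <;> simp [hij, hi, hj]
    · rw [Finset.sum_eq_zero, if_neg]
      · rintro ⟨rfl, _⟩; exact hj hi
      · intro t ht
        rw [Finset.mem_filter] at ht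
        rw [hblock t j (by rw [ht.2]; exact fun h => hj h.symm), mul_zero]
  · rw [Finset.sum_eq_zero, if_neg]
    · rintro ⟨_, h⟩; exact hi h
    · intro t ht
      rw [Finset.mem_filter] at ht
      rw [hblock t i (by rw [ht.2]; exact fun h => hi h.symm), map_zero, zero_mul]

lemma Q_mulVec {N : ℕ} {l : Fin N} {M : Matrix (Fin N → Fin 2) (Fin N → Fin 2) ℂ}
    (hcol : ∀ i j, ∑ t, (starRingEnd ℂ) (M t i) * M t j = if i = j then 1 else 0)
    (hblock : ∀ t i, t l ≠ i l → M t i = 0) (b : Fin 2) (v : (Fin N → Fin 2) → ℂ) :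
    ∑ t ∈ univ.filter (fun t => t l = b),
        (starRingEnd ℂ) ((M.mulVec v) t) * (M.mulVec v) t
      = ∑ i ∈ univ.filter (fun i => i l = b), (starRingEnd ℂ) (v i) * v i := by
  have h1 : ∀ t : Fin N → Fin 2, (starRingEnd ℂ) ((M.mulVec v) t) * (M.mulVec v) t
      = ∑ i, ∑ j, ((starRingEnd ℂ) (M t i) * M t j)
          * ((starRingEnd ℂ) (v i) * v j) := by
    intro t
    simp only [Matrix.mulVec, dotProduct]
    rw [map_sum, Finset.sum_mul_sum]
    refine Finset.sum_congr rfl fun i _ => Finset.sum_congr rfl fun j _ => ?_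
    rw [RingHom.map_mul]; ring
  simp_rw [h1]
  rw [Finset.sum_comm]
  have h2 : ∀ i : Fin N → Fin 2,
      (∑ t ∈ univ.filter (fun t => t l = b), ∑ j, ((starRingEnd ℂ) (M t i) * M t j)
          * ((starRingEnd ℂ) (v i) * v j))
      = if i l = b then (starRingEnd ℂ) (v i) * v i else 0 := by
    intro i
    rw [Finset.sum_comm]
    have h3 : ∀ j : Fin N → Fin 2,
        (∑ t ∈ univ.filter (fun t => t l = b), ((starRingEnd ℂ) (M t i) * M t j)
            * ((starRingEnd ℂ) (v i) * v j))
        = (if i = j ∧ i l = b then (1:ℂ) else 0) * ((starRingEnd ℂ) (v i) * v j) := by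
      intro j
      rw [← Finset.sum_mul, block_col hcol hblock]
    simp_rw [h3]
    by_cases hi : i l = b
    · rw [if_pos hi]
      rw [Finset.sum_eq_single i]
      · simp [hi]
      · intro j _ hj
        rw [if_neg (fun h => hj h.1.symm), zero_mul]
      · simp
    · rw [if_neg hi, Finset.sum_eq_zero]
      intro j _
      rw [if_neg (fun h => hi h.2), zero_mul]
  simp_rw [h2]
  rw [← Finset.sum_filter]

lemma Q_wState {N : ℕ} (l : Fin N) (b : Fin 2) :
    ∑ i ∈ univ.filter (fun i => i l = b), (starRingEnd ℂ) (wState N i) * wState N i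
      = (N:ℂ)⁻¹ * ∑ k : Fin N,
          (if (if l = k then (1:Fin 2) else 0) = b then (1:ℂ) else 0) := by
  set e : Fin N → (Fin N → Fin 2) := fun k => fun j => if j = k then 1 else 0 with he
  set S : (Fin N → Fin 2) → ℂ := fun i => ∑ k, if i = e k then 1 else 0 with hS
  have hw : ∀ i, wState N i = (Real.sqrt N : ℂ)⁻¹ * S i := by
    intro i
    simp [wState, ketN, S, e, Finset.mul_sum]
  have hSconj : ∀ i, (starRingEnd ℂ) (S i) = S i := by
    intro i
    simp only [hS, map_sum]
    refine Finset.sum_congr rfl fun k _ => ?_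
    split <;> simp
  have hS01 : ∀ i, S i * S i = S i := by
    intro i
    have : S i = ((univ.filter (fun k => i = e k)).card : ℂ) := by
      simp [hS, Finset.sum_boole]
    have hcard : (univ.filter (fun k => i = e k)).card ≤ 1 := by
      refine Finset.card_le_one.mpr fun k hk k' hk' => ?_
      rw [Finset.mem_filter] at hk hk'
      have h := hk.2.symm.trans hk'.2
      have h2 := congrFun h k
      by_contra hne
      simp only [e, if_pos rfl, if_neg hne] at h2
      exact absurd h2 (by decide)
    interval_cases h : (univ.filter (fun k => i = e k)).card <;> simp_all
  have hr : (starRingEnd ℂ) ((Real.sqrt N : ℂ)⁻¹) * (Real.sqrt N : ℂ)⁻¹ = (N:ℂ)⁻¹ := by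
    rw [map_inv₀, Complex.conj_ofReal, ← mul_inv, ← Complex.ofReal_mul,
      Real.mul_self_sqrt (Nat.cast_nonneg N), Complex.ofReal_natCast]
  have hterm : ∀ i, (starRingEnd ℂ) (wState N i) * wState N i = (N:ℂ)⁻¹ * S i := by
    intro i
    rw [hw, RingHom.map_mul, hSconj, mul_mul_mul_comm, hr, hS01]
  simp_rw [hterm, ← Finset.mul_sum]
  congr 1
  have : ∀ k : Fin N, (∑ i ∈ univ.filter (fun i => i l = b), if i = e k then (1:ℂ) else 0)
      = if (if l = k then (1:Fin 2) else 0) = b then (1:ℂ) else 0 := by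
    intro k
    rw [Finset.sum_ite_eq' (univ.filter (fun i => i l = b)) (e k) (fun _ => (1:ℂ))]
    simp [e]
  rw [hS, Finset.sum_comm]
  exact Finset.sum_congr rfl fun k _ => this k

lemma card_filter_flip {N : ℕ} (l : Fin N) :
    (univ.filter fun t : Fin N → Fin 2 => t l = 0).card
      = (univ.filter fun t : Fin N → Fin 2 => t l = 1).card := by
  classical
  refine Finset.card_bij' (fun t _ => Function.update t l 1)
    (fun t _ => Function.update t l 0) ?_ ?_ ?_ ?_ <;>
    intro a ha <;>
    simp only [Finset.mem_filter, Finset.mem_univ, true_and] at ha ⊢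
  · simp
  · simp
  · rw [Function.update_idem, ← ha, Function.update_eq_self]
  · rw [Function.update_idem, ← ha, Function.update_eq_self]

theorem wState_needs_one_bit_each (N : ℕ) (hN : 2 < N) (l : Fin N) :
    ¬ ∃ U : Matrix (Fin N → Fin 2) (Fin N → Fin 2) ℂ,
      U ∈ Matrix.unitaryGroup (Fin N → Fin 2) ℂ ∧
      ∀ s : Fin N → Fin 2, ∃ R : Fin N → Matrix (Fin 2) (Fin 2) ℂ,
        (∀ k, k ≠ l → R k ∈ Matrix.unitaryGroup (Fin 2) ℂ) ∧
        R l = 1 ∧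
        ∃ c : ℂ, c ≠ 0 ∧ (tpow R).mulVec (Uᵀ.mulVec (ketN s)) = c • wState N := by
  rintro ⟨U, hU, hloc⟩
  classical
  choose R hRu hRl c hc0 hEq using hloc
  have hstar : ∀ s k, star (R s k) * R s k = 1 := by
    intro s k
    by_cases hk : k = l
    · rw [hk, hRl s]; simp
    · exact Matrix.mem_unitaryGroup_iff'.mp (hRu s k hk)
  have hblock : ∀ s (t i : Fin N → Fin 2), t l ≠ i l → tpow (R s) t i = 0 := by
    intro s t i h
    refine Finset.prod_eq_zero (Finset.mem_univ l) ?_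
    rw [hRl s]
    exact Matrix.one_apply_ne h
  have hUcol : star U * U = 1 := Matrix.mem_unitaryGroup_iff'.mp hU
  set T : ℂ := ∑ s : Fin N → Fin 2, (starRingEnd ℂ) (c s) * c s with hT
  have key : ∀ b : Fin 2,
      ((univ.filter fun t : Fin N → Fin 2 => t l = b).card : ℂ)
        = T * ((N:ℂ)⁻¹ * ∑ k : Fin N,
            (if (if l = k then (1:Fin 2) else 0) = b then (1:ℂ) else 0)) := by
    intro b
    have h1 : ∀ s : Fin N → Fin 2,
        (∑ i ∈ univ.filter (fun i => i l = b),
            (starRingEnd ℂ) ((Uᵀ.mulVec (ketN s)) i) * (Uᵀ.mulVec (ketN s)) i)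
          = ((starRingEnd ℂ) (c s) * c s) * ((N:ℂ)⁻¹ * ∑ k : Fin N,
              (if (if l = k then (1:Fin 2) else 0) = b then (1:ℂ) else 0)) := by
      intro s
      have hq := Q_mulVec (l := l) (tpow_col_orth (R s) (hstar s)) (hblock s) b
        (Uᵀ.mulVec (ketN s))
      rw [hEq s] at hq
      rw [← hq]
      have : ∀ t : Fin N → Fin 2,
          (starRingEnd ℂ) ((c s • wState N) t) * (c s • wState N) t
            = ((starRingEnd ℂ) (c s) * c s) *
              ((starRingEnd ℂ) (wState N t) * wState N t) := by
        intro t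
        simp only [Pi.smul_apply, smul_eq_mul, RingHom.map_mul]
        ring
      simp_rw [this]
      rw [← Finset.mul_sum, Q_wState l b]
    have hv : ∀ (s t : Fin N → Fin 2), (Uᵀ.mulVec (ketN s)) t = U s t := by
      intro s t
      simp only [Matrix.mulVec, dotProduct, ketN, mul_ite, mul_one, mul_zero]
      rw [Finset.sum_ite_eq' univ s (fun j => Uᵀ t j), if_pos (Finset.mem_univ s),
        Matrix.transpose_apply]
    have h2 : (∑ s : Fin N → Fin 2, ∑ i ∈ univ.filter (fun i => i l = b),
        (starRingEnd ℂ) ((Uᵀ.mulVec (ketN s)) i) * (Uᵀ.mulVec (ketN s)) i)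
          = ((univ.filter fun t : Fin N → Fin 2 => t l = b).card : ℂ) := by
      simp_rw [hv]
      rw [Finset.sum_comm]
      have hone : ∀ t : Fin N → Fin 2,
          (∑ s : Fin N → Fin 2, (starRingEnd ℂ) (U s t) * U s t) = 1 := by
        intro t
        have := congrFun (congrFun hUcol t) t
        simpa [Matrix.mul_apply, Matrix.one_apply, Matrix.conjTranspose_apply] using this
      simp_rw [hone]
      simp
    rw [← h2]
    simp_rw [h1]
    rw [← Finset.sum_mul]
  have hb1 : (∑ k : Fin N,
      (if (if l = k then (1:Fin 2) else 0) = 1 then (1:ℂ) else 0)) = 1 := by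
    have : ∀ k : Fin N, ((if l = k then (1:Fin 2) else 0) = 1) ↔ l = k := by
      intro k; split <;> simp_all
    simp_rw [this]
    simp
  have hb0 : (∑ k : Fin N,
      (if (if l = k then (1:Fin 2) else 0) = 0 then (1:ℂ) else 0)) = (N:ℂ) - 1 := by
    have : ∀ k : Fin N, (if (if l = k then (1:Fin 2) else 0) = 0 then (1:ℂ) else 0)
        = 1 - (if l = k then (1:ℂ) else 0) := by
      intro k; split <;> simp_all
    simp_rw [this]
    rw [Finset.sum_sub_distrib]
    simp
  have hk0 := key 0
  have hk1 := key 1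
  rw [hb0] at hk0
  rw [hb1] at hk1
  have hC : ((univ.filter fun t : Fin N → Fin 2 => t l = 0).card : ℂ)
      = ((univ.filter fun t : Fin N → Fin 2 => t l = 1).card : ℂ) := by
    rw [card_filter_flip l]
  rw [hk0, hk1] at hC
  -- T ≠ 0
  have hTpos : T ≠ 0 := by
    have : T = ((∑ s : Fin N → Fin 2, Complex.normSq (c s) : ℝ) : ℂ) := by
      rw [hT]
      push_cast
      exact Finset.sum_congr rfl fun s _ => (Complex.normSq_eq_conj_mul_self).symm ▸ rfl
    rw [this]
    have hpos : 0 < ∑ s : Fin N → Fin 2, Complex.normSq (c s) := by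
      apply Finset.sum_pos
      · intro s _; exact Complex.normSq_pos.mpr (hc0 s)
      · exact Finset.univ_nonempty
    exact_mod_cast hpos.ne'
  have hNne : (N:ℂ) ≠ 0 := Nat.cast_ne_zero.mpr (by omega)
  have h' : T * (N:ℂ)⁻¹ * ((N:ℂ) - 2) = 0 := by linear_combination hC
  have hsub : (N:ℂ) - 2 = 0 := by
    rcases mul_eq_zero.mp h' with h | h
    · rcases mul_eq_zero.mp h with h | h
      · exact absurd h hTpos
      · exact absurd h (inv_ne_zero hNne)
    · exact h
  have hN2 : (N:ℂ) = 2 := by linear_combination hsub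
  have hNeq : N = 2 := by exact_mod_cast hN2
  omega
end
end

section
/- For a 2×2 unitary matrix P with det P = 1 (P ∈ SU(2)), the inner product ⟨W₃| (P† ⊗ I ⊗ I) |W₃⟩ vanishes if and only if both diagonal entries of P vanish, i.e. ⟨0|P|0⟩ = ⟨1|P|1⟩ = 0. -/
/-!
STATEMENT 12: For a 2×2 unitary matrix P with det P = 1 (P ∈ SU(2)), the
inner product ⟨W₃| (P† ⊗ I ⊗ I) |W₃⟩ vanishes if and only if both diagonal
entries of P vanish, i.e. ⟨0|P|0⟩ = ⟨1|P|1⟩ = 0.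

We represent (ℂ²)^{⊗3} ≅ ℂ^8 by indexing coordinates with functions
`Fin 3 → Fin 2`.
-/

open Matrix

noncomputable section

/-- Complex inner product `⟨v|w⟩`, conjugate-linear in the first argument. -/
def qip {N : ℕ} (v w : (Fin N → Fin 2) → ℂ) : ℂ :=
  ∑ t, (starRingEnd ℂ) (v t) * w t


lemma qip_basis {N : ℕ} (M : Matrix (Fin N → Fin 2) (Fin N → Fin 2) ℂ)
    (s s' : Fin N → Fin 2) :
    qip (ketN s) (M.mulVec (ketN s')) = M s s' := by
  simp [qip, ketN, mulVec, dotProduct, apply_ite, Finset.sum_ite_eq',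
    Finset.sum_ite_eq]

lemma qip_smul_left {N : ℕ} (c : ℂ) (v w : (Fin N → Fin 2) → ℂ) :
    qip (c • v) w = (starRingEnd ℂ) c * qip v w := by
  simp [qip, Finset.mul_sum, mul_assoc]

lemma qip_smul_right {N : ℕ} (c : ℂ) (v w : (Fin N → Fin 2) → ℂ) :
    qip v (c • w) = c * qip v w := by
  simp [qip, Finset.mul_sum]; exact Finset.sum_congr rfl fun t _ => by ring

lemma qip_sum_left {N : ℕ} {ι : Type*} (s : Finset ι) (v : ι → (Fin N → Fin 2) → ℂ)
    (w : (Fin N → Fin 2) → ℂ) :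
    qip (∑ k ∈ s, v k) w = ∑ k ∈ s, qip (v k) w := by
  simp [qip, Finset.sum_mul]; rw [Finset.sum_comm]

lemma qip_sum_right {N : ℕ} {ι : Type*} (s : Finset ι) (v : (Fin N → Fin 2) → ℂ)
    (w : ι → (Fin N → Fin 2) → ℂ) :
    qip v (∑ k ∈ s, w k) = ∑ k ∈ s, qip v (w k) := by
  simp [qip, Finset.mul_sum]; rw [Finset.sum_comm]

lemma w3_key (P : Matrix (Fin 2) (Fin 2) ℂ) :
    qip (wState 3) ((tpow ![Pᴴ, 1, 1]).mulVec (wState 3)) =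
      ((starRingEnd ℂ) (P 1 1) + 2 * (starRingEnd ℂ) (P 0 0)) / 3 := by
  have h3 : (starRingEnd ℂ) ((Real.sqrt ((3:ℕ):ℝ) : ℂ))⁻¹ * ((Real.sqrt ((3:ℕ):ℝ) : ℂ))⁻¹ = 1/3 := by
    rw [map_inv₀, Complex.conj_ofReal, ← mul_inv, ← Complex.ofReal_mul,
      Real.mul_self_sqrt (by norm_num)]
    norm_num
  rw [wState, mulVec_smul, qip_smul_left, qip_smul_right, qip_sum_left]
  have : ∀ k : Fin 3, qip (ketN fun j => if j = k then 1 else 0)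
      ((tpow ![Pᴴ, 1, 1]).mulVec (∑ l : Fin 3, ketN fun j => if j = l then 1 else 0)) =
      ∑ l : Fin 3, tpow ![Pᴴ, 1, 1] (fun j => if j = k then 1 else 0)
        (fun j => if j = l then 1 else 0) := by
    intro k
    rw [show (tpow ![Pᴴ, 1, 1]).mulVec (∑ l : Fin 3, ketN fun j => if j = l then 1 else 0)
        = ∑ l : Fin 3, (tpow ![Pᴴ, 1, 1]).mulVec (ketN fun j => if j = l then 1 else 0) by
      ext t
      simp [mulVec, dotProduct, Finset.sum_apply, Finset.mul_sum]
      rw [Finset.sum_comm]]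
    rw [qip_sum_right]
    exact Finset.sum_congr rfl fun l _ => qip_basis _ _ _
  simp only [this]
  rw [← mul_assoc, h3]
  simp only [tpow, Fin.sum_univ_three, of_apply, Fin.prod_univ_three]
  norm_num [Matrix.one_apply, conjTranspose_apply, Fin.ext_iff, Matrix.cons_val_two, Matrix.tail_cons, Matrix.head_cons]
  ring

theorem w3_overlap_vanishes_iff_diag_zero (P : Matrix (Fin 2) (Fin 2) ℂ)
    (hP : P ∈ Matrix.specialUnitaryGroup (Fin 2) ℂ) :
    qip (wState 3) ((tpow ![Pᴴ, 1, 1]).mulVec (wState 3)) = 0 ↔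
      P 0 0 = 0 ∧ P 1 1 = 0 := by
  have hdiag : (starRingEnd ℂ) (P 1 1) = P 0 0 := by
    obtain ⟨hU, hdet⟩ := Matrix.mem_specialUnitaryGroup_iff.mp hP
    have h1 : P * Pᴴ = 1 := by
      simpa [star_eq_conjTranspose] using (Matrix.mem_unitaryGroup_iff.mp hU)
    have h2 : P * P.adjugate = 1 := by rw [Matrix.mul_adjugate, hdet, one_smul]
    have h3 : Pᴴ = P.adjugate := by
      rw [← Matrix.inv_eq_right_inv h1, ← Matrix.inv_eq_right_inv h2]
    have := congrFun (congrFun h3 1) 1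
    simpa [Matrix.conjTranspose_apply, Matrix.adjugate_fin_two] using this
  rw [w3_key]
  constructor
  · intro h
    have h0 : P 0 0 + 2 * (starRingEnd ℂ) (P 0 0) = 0 := by
      field_simp [hdiag] at h
      linear_combination h - hdiag
    have h0' : (starRingEnd ℂ) (P 0 0) + 2 * P 0 0 = 0 := by
      have := congrArg (starRingEnd ℂ) h0
      simpa [Complex.conj_ofNat] using this
    have hz : P 0 0 = 0 := by linear_combination (2 * h0' - h0) / 3
    refine ⟨hz, ?_⟩
    have : (starRingEnd ℂ) (P 1 1) = 0 := by rw [hdiag, hz]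
    simpa using congrArg (starRingEnd ℂ) this
  · rintro ⟨h0, h1⟩
    simp [h0, h1]
end
end

section
/- There do not exist three matrices P, Q, R ∈ SU(2), each with zero diagonal entries, such that Tr(P†Q†) = Tr(P†R†) = Tr(R†Q†) = 0. -/
/-!
STATEMENT 14: There do not exist three matrices P, Q, R ∈ SU(2), each with
zero diagonal entries, such that Tr(P†Q†) = Tr(P†R†) = Tr(R†Q†) = 0.
-/

open Matrix

noncomputable section

theorem no_three_antidiagonal_su2_pairwise_trace_orthogonal :
    ¬ ∃ P Q R : Matrix (Fin 2) (Fin 2) ℂ,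
      P ∈ Matrix.specialUnitaryGroup (Fin 2) ℂ ∧
      Q ∈ Matrix.specialUnitaryGroup (Fin 2) ℂ ∧
      R ∈ Matrix.specialUnitaryGroup (Fin 2) ℂ ∧
      P 0 0 = 0 ∧ P 1 1 = 0 ∧
      Q 0 0 = 0 ∧ Q 1 1 = 0 ∧
      R 0 0 = 0 ∧ R 1 1 = 0 ∧
      (Pᴴ * Qᴴ).trace = 0 ∧ (Pᴴ * Rᴴ).trace = 0 ∧ (Rᴴ * Qᴴ).trace = 0 := by
  rintro ⟨P, Q, R, hP, hQ, hR, hP00, hP11, hQ00, hQ11, hR00, hR11, h1, h2, h3⟩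
  have dP : P.det = 1 := ((Matrix.mem_specialUnitaryGroup_iff).mp hP).2
  have dQ : Q.det = 1 := ((Matrix.mem_specialUnitaryGroup_iff).mp hQ).2
  have dR : R.det = 1 := ((Matrix.mem_specialUnitaryGroup_iff).mp hR).2
  rw [Matrix.det_fin_two, hP00, hP11] at dP
  rw [Matrix.det_fin_two, hQ00, hQ11] at dQ
  rw [Matrix.det_fin_two, hR00, hR11] at dR
  simp only [Matrix.trace_fin_two, Matrix.mul_apply, Fin.sum_univ_two,
    Matrix.conjTranspose_apply, hP00, hP11, hQ00, hQ11, hR00, hR11,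
    star_zero, zero_mul, mul_zero, zero_add, add_zero] at h1 h2 h3
  set a := P 0 1; set a' := P 1 0
  set b := Q 0 1; set b' := Q 1 0
  set c := R 0 1; set c' := R 1 0
  have F1 : a' * b + a * b' = 0 := by
    have := congrArg star h1
    simpa [star_add, StarMul.star_mul, mul_comm] using this
  have F2 : a' * c + a * c' = 0 := by
    have := congrArg star h2
    simpa [star_add, StarMul.star_mul, mul_comm] using this
  have F3 : c' * b + c * b' = 0 := by
    have := congrArg star h3
    simpa [star_add, StarMul.star_mul, mul_comm] using this
  have E1 : a * a' = -1 := by linear_combination -dP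
  have E2 : b * b' = -1 := by linear_combination -dQ
  have E3 : c * c' = -1 := by linear_combination -dR
  have hab : a ^ 2 + b ^ 2 = 0 := by
    linear_combination b ^ 2 * E1 + a ^ 2 * E2 - a * b * F1
  have hac : a ^ 2 + c ^ 2 = 0 := by
    linear_combination c ^ 2 * E1 + a ^ 2 * E3 - a * c * F2
  have hbc : b ^ 2 + c ^ 2 = 0 := by
    linear_combination c ^ 2 * E2 + b ^ 2 * E3 - b * c * F3
  have ha : a ^ 2 = 0 := by linear_combination (hab + hac - hbc) / 2
  have ha0 : a = 0 := by
    exact pow_eq_zero_iff (n := 2) (by norm_num) |>.mp ha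
  rw [ha0, zero_mul] at E1
  exact absurd E1 (by norm_num)
end
end
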